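/- arXiv:1706.06220 — 5 statements merged into one kernel-verified Lean document; each statement's English description precedes it below -/
import Mathlib

section
/- Let n, q, m11, m12, m21, m22 be naturals with n ≥ 1, q ≥ 1 and m11, m12, m21, m22 ≤ q. Let W1, W2 be random variables with values in nonempty finite types and let X1, X2 : Ω → (Fin n → (Fin q → ZMod 2)) be random variables such that the pair (W1, X1) is independent of the pair (W2, X2). Define the channel outputs pointwise by y1 t = D_{m11}(X1 t) + D_{m12}(X2 t) and y2 t = D_{m21}(X1 t) + D_{m22}(X2 t). Then I(W1 : y1) − I(W1 : y2) + I(W2 : y2) − I(W2 : y1) ≤ n · ( max{m21 − (m11 − m12)^+, m22 − m12, 0} + max{m12 − (m22 − m21)^+, m11 − m21, 0} ) · log 2, where the maxima are taken over the integers. -/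
open MeasureTheory ProbabilityTheory Real

/-- Shannon entropy (natural logarithm) of a random variable with values in a finite type. -/
noncomputable def entropy {Ω : Type*} [MeasurableSpace Ω] (μ : Measure Ω)
    {S : Type*} [Fintype S] (X : Ω → S) : ℝ :=
  - ∑ x : S, ((μ (X ⁻¹' {x})).toReal * Real.log (μ (X ⁻¹' {x})).toReal)

/-- Conditional entropy H(X | Y) := H(⟨X,Y⟩) − H(Y). -/
noncomputable def condEntropy {Ω : Type*} [MeasurableSpace Ω] (μ : Measure Ω)
    {S T : Type*} [Fintype S] [Fintype T] (X : Ω → S) (Y : Ω → T) : ℝ :=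
  entropy μ (fun ω => (X ω, Y ω)) - entropy μ Y

/-- Mutual information I(X : Y) := H(X) + H(Y) − H(⟨X,Y⟩). -/
noncomputable def mutualInfo {Ω : Type*} [MeasurableSpace Ω] (μ : Measure Ω)
    {S T : Type*} [Fintype S] [Fintype T] (X : Ω → S) (Y : Ω → T) : ℝ :=
  entropy μ X + entropy μ Y - entropy μ (fun ω => (X ω, Y ω))

/-- The shift map `D_m` : multiplication by `S^(q-m)` with `S` the `q × q` lower shift matrix. -/
def Dmap (q m : ℕ) (x : Fin q → ZMod 2) : Fin q → ZMod 2 :=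
  fun i => if _ : q - m ≤ (i : ℕ) then
      x ⟨(i : ℕ) - (q - m), Nat.lt_of_le_of_lt (Nat.sub_le _ _) i.isLt⟩
    else 0

set_option linter.unusedSectionVars false
set_option maxHeartbeats 1000000

namespace EntLib

variable {Ω : Type*} [MeasurableSpace Ω] (μ : Measure Ω) [IsProbabilityMeasure μ]
variable {S T U : Type*} [Fintype S] [Fintype T] [Fintype U]

def Fib (X : Ω → S) : Prop := ∀ x : S, MeasurableSet (X ⁻¹' {x})

noncomputable def pr (X : Ω → S) (x : S) : ℝ := (μ (X ⁻¹' {x})).toReal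

variable {μ}

/-- superadditivity of negMulLog -/
lemma negMulLog_sum_le {ι : Type*} (s : Finset ι) (g : ι → ℝ) (h0 : ∀ x ∈ s, 0 ≤ g x) :
    Real.negMulLog (∑ x ∈ s, g x) ≤ ∑ x ∈ s, Real.negMulLog (g x) := by
  have hP0 : (0:ℝ) ≤ ∑ x ∈ s, g x := Finset.sum_nonneg h0
  have key : ∀ x ∈ s, -(g x) * Real.log (∑ x ∈ s, g x) ≤ Real.negMulLog (g x) := by
    intro x hx
    rcases eq_or_lt_of_le (h0 x hx) with h | h
    · simp [Real.negMulLog, ← h]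
    · have hgP : g x ≤ ∑ x ∈ s, g x := Finset.single_le_sum h0 hx
      have hlog : Real.log (g x) ≤ Real.log (∑ x ∈ s, g x) := Real.log_le_log h hgP
      have := mul_le_mul_of_nonneg_left hlog (le_of_lt h)
      simp only [Real.negMulLog]
      nlinarith
  calc Real.negMulLog (∑ x ∈ s, g x) = ∑ x ∈ s, (-(g x) * Real.log (∑ x ∈ s, g x)) := by
        simp only [Real.negMulLog]
        rw [← Finset.sum_mul, ← Finset.sum_neg_distrib]
    _ ≤ _ := Finset.sum_le_sum key

/-- Jensen-type bound -/
lemma sum_negMulLog_le {S : Type*} [Fintype S] (g : S → ℝ) (h0 : ∀ x, 0 ≤ g x) :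
    ∑ x, Real.negMulLog (g x) ≤
      Real.negMulLog (∑ x, g x) + (∑ x, g x) * Real.log (Fintype.card S) := by
  have hP0 : 0 ≤ ∑ x, g x := Finset.sum_nonneg fun x _ => h0 x
  rcases eq_or_lt_of_le hP0 with h | h
  · have hz : ∀ x, g x = 0 := fun x =>
      (Finset.sum_eq_zero_iff_of_nonneg (fun x _ => h0 x)).1 h.symm x (Finset.mem_univ x)
    simp [hz]
  · have hne : Nonempty S := by
      by_contra hc
      rw [not_nonempty_iff] at hc
      rw [Finset.univ_eq_empty, Finset.sum_empty] at h
      exact lt_irrefl _ h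
    have hcard : (0:ℝ) < Fintype.card S := by
      have := Fintype.card_pos (α := S)
      exact_mod_cast this
    -- pointwise bound
    have key : ∀ x : S, Real.negMulLog (g x) ≤
        -(g x) * Real.log (∑ y, g y) + g x * Real.log (Fintype.card S)
          + ((∑ y, g y) / (Fintype.card S) - g x) := by
      intro x
      rcases eq_or_lt_of_le (h0 x) with hgx | hgx
      · rw [← hgx]
        simp only [Real.negMulLog_zero, neg_zero, zero_mul, add_zero, sub_zero, zero_add]
        positivity
      · have hlog := Real.log_le_sub_one_of_pos
          (show (0:ℝ) < (∑ y, g y) / (g x * Fintype.card S) by positivity)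
        rw [Real.log_div (by positivity) (by positivity), Real.log_mul (by positivity) (by positivity)] at hlog
        have h2 := mul_le_mul_of_nonneg_left hlog (le_of_lt hgx)
        simp only [Real.negMulLog]
        have hexp : g x * ((∑ y, g y) / (g x * ↑(Fintype.card S)) - 1)
            = (∑ y, g y) / (Fintype.card S) - g x := by
          field_simp
        nlinarith [h2, hexp]
    calc ∑ x, Real.negMulLog (g x) ≤ ∑ x, (-(g x) * Real.log (∑ y, g y)
          + g x * Real.log (Fintype.card S) + ((∑ y, g y) / (Fintype.card S) - g x)) :=
          Finset.sum_le_sum fun x _ => key x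
      _ = Real.negMulLog (∑ y, g y) + (∑ y, g y) * Real.log (Fintype.card S) := by
          rw [Finset.sum_add_distrib, Finset.sum_add_distrib, Finset.sum_sub_distrib]
          simp only [Real.negMulLog, ← Finset.sum_mul, ← Finset.sum_neg_distrib,
            Finset.sum_const, Finset.card_univ, nsmul_eq_mul]
          have : (Fintype.card S : ℝ) * ((∑ y, g y) / (Fintype.card S)) = ∑ y, g y := by
            field_simp
          rw [this]
          ring


lemma Fib.preimage {X : Ω → S} (hX : Fib X) (A : Set S) : MeasurableSet (X ⁻¹' A) := by
  have : X ⁻¹' A = ⋃ x ∈ A, X ⁻¹' {x} := by ext ω; simp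
  rw [this]
  exact MeasurableSet.biUnion (Set.to_countable _) fun x _ => hX x

lemma Fib.comp {X : Ω → S} (hX : Fib X) (f : S → T) : Fib (fun ω => f (X ω)) :=
  fun t => hX.preimage (f ⁻¹' {t})

lemma Fib.pair {X : Ω → S} {Y : Ω → T} (hX : Fib X) (hY : Fib Y) :
    Fib (fun ω => (X ω, Y ω)) := by
  intro xy
  have : (fun ω => (X ω, Y ω)) ⁻¹' {xy} = X ⁻¹' {xy.1} ∩ Y ⁻¹' {xy.2} := by
    ext ω; simp [Prod.ext_iff]
  rw [this]; exact (hX _).inter (hY _)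

lemma pr_nonneg {X : Ω → S} {x : S} : 0 ≤ pr μ X x := ENNReal.toReal_nonneg

lemma pr_le_one {X : Ω → S} {x : S} : pr μ X x ≤ 1 := by
  have h := prob_le_one (μ := μ) (s := X ⁻¹' {x})
  simpa [pr] using ENNReal.toReal_mono (by norm_num) h

lemma sum_pr {X : Ω → S} (hX : Fib X) : ∑ x : S, pr μ X x = 1 := by
  unfold pr
  rw [← ENNReal.toReal_sum (fun a _ => measure_ne_top μ _)]
  rw [sum_measure_preimage_singleton Finset.univ (fun y _ => hX y)]
  simp

lemma entropy_eq (X : Ω → S) : entropy μ X = ∑ x : S, Real.negMulLog (pr μ X x) := by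
  unfold entropy pr Real.negMulLog
  rw [← Finset.sum_neg_distrib]
  exact Finset.sum_congr rfl fun x _ => by ring

/-- general marginalization lemma -/
lemma pr_comp_eq_sum {X : Ω → S} (hX : Fib X) (f : S → T) (t : T) {ι : Type*} [Fintype ι]
    (e : ι → S) (he : Function.Injective e) (hfib : ∀ s, f s = t ↔ ∃ i, e i = s) :
    pr μ (fun ω => f (X ω)) t = ∑ i, pr μ X (e i) := by
  unfold pr
  rw [← ENNReal.toReal_sum (fun a _ => measure_ne_top μ _)]
  congr 1
  have h1 : (fun ω => f (X ω)) ⁻¹' {t} = ⋃ i ∈ (Finset.univ : Finset ι), X ⁻¹' {e i} := by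
    ext ω
    simp only [Set.mem_preimage, Set.mem_singleton_iff, Set.mem_iUnion, Finset.mem_univ,
      true_and, exists_prop]
    rw [hfib (X ω)]
    constructor
    · rintro ⟨i, hi⟩; exact ⟨i, hi.symm⟩
    · rintro ⟨i, hi⟩; exact ⟨i, hi.symm⟩
  rw [h1, measure_biUnion_finset ?_ (fun i _ => hX _)]
  intro i _ j _ hne
  refine Set.disjoint_left.2 fun ω hωi hωj => hne ?_
  simp only [Set.mem_preimage, Set.mem_singleton_iff] at hωi hωj
  exact he (by rw [← hωi, ← hωj])

/-- entropy decreases under maps -/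
lemma entropy_comp_le [DecidableEq T] {X : Ω → S} (hX : Fib X) (f : S → T) :
    entropy μ (fun ω => f (X ω)) ≤ entropy μ X := by
  rw [entropy_eq, entropy_eq]
  have key : ∀ t : T, Real.negMulLog (pr μ (fun ω => f (X ω)) t)
      ≤ ∑ x ∈ Finset.univ.filter (fun x => f x = t), Real.negMulLog (pr μ X x) := by
    intro t
    have hm : pr μ (fun ω => f (X ω)) t
        = ∑ x ∈ Finset.univ.filter (fun x => f x = t), pr μ X x := by
      unfold pr
      rw [← ENNReal.toReal_sum (fun a _ => measure_ne_top μ _)]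
      congr 1
      have h1 : (fun ω => f (X ω)) ⁻¹' {t}
          = ⋃ x ∈ Finset.univ.filter (fun x => f x = t), X ⁻¹' {x} := by
        ext ω; simp
      rw [h1, measure_biUnion_finset ?_ (fun x _ => hX x)]
      intro x _ x' _ hne
      refine Set.disjoint_left.2 fun ω h1 h2 => hne ?_
      simp only [Set.mem_preimage, Set.mem_singleton_iff] at h1 h2
      rw [← h1, ← h2]
    rw [hm]
    exact negMulLog_sum_le _ _ (fun x _ => pr_nonneg)
  calc ∑ t, Real.negMulLog (pr μ (fun ω => f (X ω)) t)
      ≤ ∑ t, ∑ x ∈ Finset.univ.filter (fun x => f x = t), Real.negMulLog (pr μ X x) :=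
        Finset.sum_le_sum fun t _ => key t
    _ = ∑ x, Real.negMulLog (pr μ X x) := Finset.sum_fiberwise _ _ _

/-- entropy invariance under mutual deterministic maps -/
lemma entropy_eq_of_comp [DecidableEq S] [DecidableEq T] {X : Ω → S} {Y : Ω → T}
    (hX : Fib X) (hY : Fib Y) (f : S → T) (g : T → S)
    (hf : ∀ ω, f (X ω) = Y ω) (hg : ∀ ω, g (Y ω) = X ω) : entropy μ X = entropy μ Y := by
  have h1 : entropy μ Y ≤ entropy μ X := by
    have := entropy_comp_le (μ := μ) hX f
    rwa [show (fun ω => f (X ω)) = Y from funext hf] at this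
  have h2 : entropy μ X ≤ entropy μ Y := by
    have := entropy_comp_le (μ := μ) hY g
    rwa [show (fun ω => g (Y ω)) = X from funext hg] at this
  linarith

/-- Gibbs-type core inequality for submodularity of entropy. -/
lemma gibbs3 {S T U : Type*} [Fintype S] [Fintype T] [Fintype U] (p : S → T → U → ℝ)
    (h0 : ∀ x y z, 0 ≤ p x y z) :
    (∑ x, ∑ y, ∑ z, negMulLog (p x y z)) + ∑ y, negMulLog (∑ x, ∑ z, p x y z)
      ≤ (∑ x, ∑ y, negMulLog (∑ z, p x y z)) + ∑ y, ∑ z, negMulLog (∑ x, p x y z) := by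
  classical
  set a : S → T → ℝ := fun x y => ∑ z, p x y z with ha
  set b : T → U → ℝ := fun y z => ∑ x, p x y z with hb
  set c : T → ℝ := fun y => ∑ x, ∑ z, p x y z with hc
  have ha0 : ∀ x y, 0 ≤ a x y := fun x y => Finset.sum_nonneg fun z _ => h0 x y z
  have hb0 : ∀ y z, 0 ≤ b y z := fun y z => Finset.sum_nonneg fun x _ => h0 x y z
  have hc0 : ∀ y, 0 ≤ c y := fun y => Finset.sum_nonneg fun x _ => ha0 x y
  have hca : ∀ y, c y = ∑ x, a x y := fun y => rfl
  have hcb : ∀ y, c y = ∑ z, b y z := fun y => by rw [hc, hb]; exact Finset.sum_comm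
  -- pointwise: negMulLog p - p log c ≤ -p log a - p log b + (a*b/c - p)
  have key : ∀ x y z, negMulLog (p x y z) + (-(p x y z) * Real.log (c y))
      ≤ (-(p x y z) * Real.log (a x y)) + (-(p x y z) * Real.log (b y z))
        + (a x y * b y z / c y - p x y z) := by
    intro x y z
    rcases eq_or_lt_of_le (h0 x y z) with hp | hp
    · rw [← hp]
      simp only [negMulLog_zero, neg_zero, zero_mul, add_zero, zero_add, sub_zero]
      have : 0 ≤ a x y * b y z / c y := div_nonneg (mul_nonneg (ha0 _ _) (hb0 _ _)) (hc0 _)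
      linarith
    · have hpa : p x y z ≤ a x y := Finset.single_le_sum (fun z _ => h0 x y z) (Finset.mem_univ z)
      have hpb : p x y z ≤ b y z := Finset.single_le_sum (fun x _ => h0 x y z) (Finset.mem_univ x)
      have hpc : a x y ≤ c y := by
        rw [hca y]; exact Finset.single_le_sum (fun x _ => ha0 x y) (Finset.mem_univ x)
      have ha' : 0 < a x y := lt_of_lt_of_le hp hpa
      have hb' : 0 < b y z := lt_of_lt_of_le hp hpb
      have hc' : 0 < c y := lt_of_lt_of_le ha' hpc
      have hlog := Real.log_le_sub_one_of_pos
        (show (0:ℝ) < a x y * b y z / (c y * p x y z) by positivity)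
      rw [Real.log_div (by positivity) (by positivity), Real.log_mul (by positivity) (by positivity),
        Real.log_mul (by positivity) (by positivity)] at hlog
      have h2 := mul_le_mul_of_nonneg_left hlog (le_of_lt hp)
      have hexp : p x y z * (a x y * b y z / (c y * p x y z) - 1)
          = a x y * b y z / c y - p x y z := by
        field_simp
      simp only [negMulLog]
      nlinarith [h2, hexp]
  -- sum the pointwise bound
  have hsum := Finset.sum_le_sum (fun x (_ : x ∈ Finset.univ) =>
    Finset.sum_le_sum (fun y (_ : y ∈ Finset.univ) =>
      Finset.sum_le_sum (fun z (_ : z ∈ Finset.univ) => key x y z)))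
  -- identify the summed pieces
  have dsum : ∀ (L : ℝ) (f : S → U → ℝ), ∑ x, ∑ z, (-(f x z) * L) = -(∑ x, ∑ z, f x z) * L := by
    intro L f
    simp only [neg_mul, Finset.sum_neg_distrib, Finset.sum_mul]
  have e1 : ∑ x, ∑ y, ∑ z, (-(p x y z) * Real.log (c y)) = ∑ y, negMulLog (c y) := by
    rw [Finset.sum_comm]
    refine Finset.sum_congr rfl fun y _ => ?_
    rw [dsum (Real.log (c y)) (fun x z => p x y z), hc]
    simp [negMulLog]
  have e2 : ∑ x, ∑ y, ∑ z, (-(p x y z) * Real.log (a x y)) = ∑ x, ∑ y, negMulLog (a x y) := by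
    refine Finset.sum_congr rfl fun x _ => Finset.sum_congr rfl fun y _ => ?_
    have : ∑ z, (-(p x y z) * Real.log (a x y)) = -(∑ z, p x y z) * Real.log (a x y) := by
      simp only [neg_mul, Finset.sum_neg_distrib, Finset.sum_mul]
    rw [this, ha]
    simp [negMulLog]
  have e3 : ∑ x, ∑ y, ∑ z, (-(p x y z) * Real.log (b y z)) = ∑ y, ∑ z, negMulLog (b y z) := by
    rw [Finset.sum_comm]
    refine Finset.sum_congr rfl fun y _ => ?_
    rw [Finset.sum_comm]
    refine Finset.sum_congr rfl fun z _ => ?_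
    have : ∑ x, (-(p x y z) * Real.log (b y z)) = -(∑ x, p x y z) * Real.log (b y z) := by
      simp only [neg_mul, Finset.sum_neg_distrib, Finset.sum_mul]
    rw [this, hb]
    simp [negMulLog]
  have e4 : ∑ x, ∑ y, ∑ z, (a x y * b y z / c y - p x y z) = 0 := by
    rw [Finset.sum_comm]
    have hy : ∀ y, ∑ x, ∑ z, (a x y * b y z / c y) = c y := by
      intro y
      rcases eq_or_lt_of_le (hc0 y) with hcy | hcy
      · have hax : ∀ x, a x y = 0 := by
          intro x
          have := (Finset.sum_eq_zero_iff_of_nonneg (fun x _ => ha0 x y)).1 ((hca y) ▸ hcy.symm)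
          exact this x (Finset.mem_univ x)
        simp [hax, ← hcy]
      · have : ∑ x, ∑ z, (a x y * b y z / c y) = (∑ x, a x y) * (∑ z, b y z) / c y := by
          rw [Finset.sum_mul, Finset.sum_div]
          refine Finset.sum_congr rfl fun x _ => ?_
          rw [← Finset.sum_div, ← Finset.mul_sum]
        rw [this, ← hca, ← hcb]
        field_simp
    have : ∀ y, ∑ x, ∑ z, (a x y * b y z / c y - p x y z) = 0 := by
      intro y
      simp only [Finset.sum_sub_distrib]
      rw [hy y]
      rw [hc]
      ring
    exact Finset.sum_eq_zero fun y _ => this y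
  simp only [Finset.sum_add_distrib] at hsum
  rw [e1, e2, e3, e4] at hsum
  linarith [hsum]

lemma entropy_nonneg (X : Ω → S) : 0 ≤ entropy μ X := by
  rw [entropy_eq]
  exact Finset.sum_nonneg fun x _ => Real.negMulLog_nonneg pr_nonneg pr_le_one

/-- bound via cardinality: H(X,Y) ≤ H(Y) + log |S| -/
lemma entropy_pair_le [DecidableEq T] {X : Ω → S} {Y : Ω → T}
    (h : Fib (fun ω => (X ω, Y ω))) :
    entropy μ (fun ω => (X ω, Y ω)) ≤ entropy μ Y + Real.log (Fintype.card S) := by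
  classical
  have hmarg : ∀ y : T, pr μ Y y = ∑ x : S, pr μ (fun ω => (X ω, Y ω)) (x, y) := by
    intro y
    exact pr_comp_eq_sum h Prod.snd y (fun x => (x, y))
      (fun a b hab => by simpa using congrArg Prod.fst hab)
      (fun s => by
        constructor
        · intro hs; exact ⟨s.1, by rw [← hs]⟩
        · rintro ⟨x, hx⟩; rw [← hx])
  rw [entropy_eq, entropy_eq]
  calc ∑ w : S × T, Real.negMulLog (pr μ (fun ω => (X ω, Y ω)) w)
      = ∑ y : T, ∑ x : S, Real.negMulLog (pr μ (fun ω => (X ω, Y ω)) (x, y)) :=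
        Fintype.sum_prod_type_right _
    _ ≤ ∑ y : T, (Real.negMulLog (∑ x : S, pr μ (fun ω => (X ω, Y ω)) (x, y))
          + (∑ x : S, pr μ (fun ω => (X ω, Y ω)) (x, y)) * Real.log (Fintype.card S)) :=
        Finset.sum_le_sum fun y _ => sum_negMulLog_le _ (fun x => pr_nonneg)
    _ = ∑ y : T, Real.negMulLog (pr μ Y y) + (∑ y : T, pr μ Y y) * Real.log (Fintype.card S) := by
        rw [Finset.sum_add_distrib, Finset.sum_mul]
        congr 1
        · exact Finset.sum_congr rfl fun y _ => by rw [← hmarg]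
        · exact Finset.sum_congr rfl fun y _ => by rw [← hmarg]
    _ = ∑ y : T, Real.negMulLog (pr μ Y y) + Real.log (Fintype.card S) := by
        have hY : Fib Y := by
          intro y
          have := (h.comp Prod.snd) y
          exact this
        rw [sum_pr hY, one_mul]

/-- submodularity : H(X,(Y,Z)) + H(Y) ≤ H(X,Y) + H(Y,Z) -/
lemma entropy_submod {X : Ω → S} {Y : Ω → T} {Z : Ω → U}
    (h : Fib (fun ω => (X ω, (Y ω, Z ω)))) :
    entropy μ (fun ω => (X ω, (Y ω, Z ω))) + entropy μ Y
      ≤ entropy μ (fun ω => (X ω, Y ω)) + entropy μ (fun ω => (Y ω, Z ω)) := by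
  classical
  set p : S → T → U → ℝ := fun x y z => pr μ (fun ω => (X ω, (Y ω, Z ω))) (x, (y, z)) with hp
  have hXY : ∀ x y, pr μ (fun ω => (X ω, Y ω)) (x, y) = ∑ z, p x y z := fun x y =>
    pr_comp_eq_sum h (fun w => (w.1, w.2.1)) (x, y) (fun z => (x, (y, z)))
      (fun a b hab => by
        have := congrArg (fun w => w.2.2) hab
        exact this)
      (fun s => by
        obtain ⟨sx, sy, sz⟩ := s
        constructor
        · intro hs
          simp only [Prod.mk.injEq] at hs
          exact ⟨sz, by rw [hs.1, hs.2]⟩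
        · rintro ⟨z, hz⟩; rw [← hz])
  have hYZ : ∀ y z, pr μ (fun ω => (Y ω, Z ω)) (y, z) = ∑ x, p x y z := fun y z =>
    pr_comp_eq_sum h (fun w => w.2) (y, z) (fun x => (x, (y, z)))
      (fun a b hab => congrArg Prod.fst hab)
      (fun s => by
        obtain ⟨sx, sy, sz⟩ := s
        constructor
        · intro hs
          simp only [Prod.mk.injEq] at hs
          exact ⟨sx, by rw [hs.1, hs.2]⟩
        · rintro ⟨x, hx⟩; rw [← hx])
  have hY : ∀ y, pr μ Y y = ∑ w : S × U, p w.1 y w.2 := fun y =>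
    pr_comp_eq_sum h (fun w => w.2.1) y (fun w : S × U => (w.1, (y, w.2)))
      (fun a b hab => by
        have h1 := congrArg Prod.fst hab
        have h2 := congrArg (fun w : S × T × U => w.2.2) hab
        simp only at h1 h2
        exact Prod.ext h1 h2)
      (fun s => by
        obtain ⟨sx, sy, sz⟩ := s
        constructor
        · intro hs
          exact ⟨(sx, sz), by simp only at hs; rw [hs]⟩
        · rintro ⟨⟨x, z⟩, hs⟩
          simp only [Prod.mk.injEq] at hs
          rw [← hs.2.1])
  have hgibbs := gibbs3 p (fun x y z => pr_nonneg)
  rw [entropy_eq, entropy_eq, entropy_eq, entropy_eq]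
  have g1 : ∑ w : S × T × U, Real.negMulLog (pr μ (fun ω => (X ω, (Y ω, Z ω))) w)
      = ∑ x, ∑ y, ∑ z, Real.negMulLog (p x y z) := by
    rw [Fintype.sum_prod_type]
    exact Finset.sum_congr rfl fun x _ => Fintype.sum_prod_type _
  have g2 : ∑ y, Real.negMulLog (pr μ Y y) = ∑ y, Real.negMulLog (∑ x, ∑ z, p x y z) := by
    refine Finset.sum_congr rfl fun y _ => ?_
    rw [hY y, Fintype.sum_prod_type]
  have g3 : ∑ w : S × T, Real.negMulLog (pr μ (fun ω => (X ω, Y ω)) w)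
      = ∑ x, ∑ y, Real.negMulLog (∑ z, p x y z) := by
    rw [Fintype.sum_prod_type]
    exact Finset.sum_congr rfl fun x _ => Finset.sum_congr rfl fun y _ => by rw [hXY]
  have g4 : ∑ w : T × U, Real.negMulLog (pr μ (fun ω => (Y ω, Z ω)) w)
      = ∑ y, ∑ z, Real.negMulLog (∑ x, p x y z) := by
    rw [Fintype.sum_prod_type]
    exact Finset.sum_congr rfl fun y _ => Finset.sum_congr rfl fun z _ => by rw [hYZ]
  rw [g1, g2, g3, g4]
  exact hgibbs

/-- additivity of entropy for independent variables (probability product form) -/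
lemma entropy_indep {X : Ω → S} {Y : Ω → T} (hX : Fib X) (hY : Fib Y)
    (hInd : ∀ x y, μ (X ⁻¹' {x} ∩ Y ⁻¹' {y}) = μ (X ⁻¹' {x}) * μ (Y ⁻¹' {y})) :
    entropy μ (fun ω => (X ω, Y ω)) = entropy μ X + entropy μ Y := by
  have hpair : ∀ x y, pr μ (fun ω => (X ω, Y ω)) (x, y) = pr μ X x * pr μ Y y := by
    intro x y
    unfold pr
    rw [show (fun ω => (X ω, Y ω)) ⁻¹' {(x, y)} = X ⁻¹' {x} ∩ Y ⁻¹' {y} by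
      ext ω; simp [Prod.ext_iff]]
    rw [hInd x y, ENNReal.toReal_mul]
  rw [entropy_eq, entropy_eq, entropy_eq]
  rw [Fintype.sum_prod_type]
  have : ∀ x, ∑ y, Real.negMulLog (pr μ (fun ω => (X ω, Y ω)) (x, y))
      = Real.negMulLog (pr μ X x) + pr μ X x * ∑ y, Real.negMulLog (pr μ Y y) := by
    intro x
    have : ∀ y, Real.negMulLog (pr μ (fun ω => (X ω, Y ω)) (x, y))
        = pr μ Y y * Real.negMulLog (pr μ X x) + pr μ X x * Real.negMulLog (pr μ Y y) := by
      intro y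
      rw [hpair x y, Real.negMulLog_mul]
    rw [Finset.sum_congr rfl fun y _ => this y, Finset.sum_add_distrib, ← Finset.sum_mul,
      sum_pr hY, one_mul, ← Finset.mul_sum]
  rw [Finset.sum_congr rfl fun x _ => this x, Finset.sum_add_distrib, ← Finset.sum_mul,
    sum_pr hX, one_mul]

end EntLib


/-- restriction of the `Xa` block to its first `min (p11-p12) p21` coordinates -/
def sbm (n q p11 p12 p21 : ℕ) (h3 : p21 ≤ q) (x : Fin n → Fin q → ZMod 2) :
    Fin n → Fin (min (p11 - p12) p21) → ZMod 2 :=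
  fun t j => x t ⟨j.1, by have := j.2; omega⟩

/-- restriction of the `Xb` block to its first `p12` coordinates -/
def vmp (n q p12 : ℕ) (h2 : p12 ≤ q) (x : Fin n → Fin q → ZMod 2) :
    Fin n → Fin p12 → ZMod 2 :=
  fun t k => x t ⟨k.1, by have := k.2; omega⟩

/-- bottom `a1` coordinates of a signal -/
def rmp (n q a1 : ℕ) (ha : a1 ≤ q) (y : Fin n → Fin q → ZMod 2) :
    Fin n → Fin a1 → ZMod 2 :=
  fun t r => y t ⟨q - a1 + r.1, by have := r.2; omega⟩

/-- reconstruction map -/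
def reconF (n q p21 p22 e m a1 : ℕ) (s : Fin n → Fin e → ZMod 2)
    (v : Fin n → Fin m → ZMod 2) (r : Fin n → Fin a1 → ZMod 2) : Fin n → Fin q → ZMod 2 :=
  fun t i =>
    if h : q - a1 ≤ i.1 ∧ i.1 - (q - a1) < a1 then r t ⟨i.1 - (q - a1), h.2⟩
    else (if h1 : q - p21 ≤ i.1 ∧ i.1 - (q - p21) < e then s t ⟨i.1 - (q - p21), h1.2⟩ else 0)
       + (if h2 : q - p22 ≤ i.1 ∧ i.1 - (q - p22) < m then v t ⟨i.1 - (q - p22), h2.2⟩ else 0)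

/-- extraction of `sbm Xa` from the clean part of `ya` -/
def sbext (n q p11 p12 p21 : ℕ) (h1 : p11 ≤ q) (y : Fin n → Fin q → ZMod 2) :
    Fin n → Fin (min (p11 - p12) p21) → ZMod 2 :=
  fun t j => y t ⟨q - p11 + j.1, by have := j.2; omega⟩

/-- extraction of `vmp Xb` from `ya` given `Xa` -/
def vext (n q p11 p12 : ℕ) (h2 : p12 ≤ q) (x y : Fin n → Fin q → ZMod 2) :
    Fin n → Fin p12 → ZMod 2 :=
  fun t k => y t ⟨q - p12 + k.1, by have := k.2; omega⟩
    - Dmap q p11 (x t) ⟨q - p12 + k.1, by have := k.2; omega⟩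

/-- embedding of the first `p12` coordinates back into a full block -/
def vemb (n q p12 : ℕ) (v : Fin n → Fin p12 → ZMod 2) : Fin n → Fin q → ZMod 2 :=
  fun t i => if h : i.1 < p12 then v t ⟨i.1, h⟩ else 0

open EntLib in
lemma key_lemma {Ω : Type*} [MeasurableSpace Ω] {μ : Measure Ω} [IsProbabilityMeasure μ]
    (n q p11 p12 p21 p22 : ℕ)
    (h1 : p11 ≤ q) (h2 : p12 ≤ q) (h3 : p21 ≤ q) (h4 : p22 ≤ q)
    {D : Type*} [Fintype D] [MeasurableSpace D] [MeasurableSingletonClass D]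
    (C : Ω → D) (Xa Xb : Ω → Fin n → Fin q → ZMod 2)
    (hC : Measurable C) (hXa : Measurable Xa) (hXb : Measurable Xb)
    (hInd : IndepFun (fun ω => (C ω, Xa ω)) Xb μ)
    (ya yb : Ω → Fin n → Fin q → ZMod 2)
    (hya : ∀ ω t, ya ω t = Dmap q p11 (Xa ω t) + Dmap q p12 (Xb ω t))
    (hyb : ∀ ω t, yb ω t = Dmap q p21 (Xa ω t) + Dmap q p22 (Xb ω t)) :
    entropy μ (fun ω => (C ω, yb ω)) - entropy μ (fun ω => (C ω, ya ω))
      ≤ (n : ℝ) * ((max (p21 - (p11 - p12)) (p22 - p12) : ℕ) : ℝ) * Real.log 2 := by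
  classical
  -- abbreviations
  set Sb : Ω → (Fin n → Fin (min (p11 - p12) p21) → ZMod 2) :=
    fun ω => sbm n q p11 p12 p21 h3 (Xa ω) with hSb
  set V : Ω → (Fin n → Fin p12 → ZMod 2) := fun ω => vmp n q p12 h2 (Xb ω) with hV
  set A1 : ℕ := min (max (p21 - (p11 - p12)) (p22 - p12)) q with hA1def
  have hA1q : A1 ≤ q := min_le_right _ _
  set R : Ω → (Fin n → Fin A1 → ZMod 2) := fun ω => rmp n q A1 hA1q (yb ω) with hR
  -- measurability / fibs
  have hFC : Fib C := fun x => hC (measurableSet_singleton x)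
  have hFXa : Fib Xa := fun x => hXa (measurableSet_singleton x)
  have hFXb : Fib Xb := fun x => hXb (measurableSet_singleton x)
  have hya' : ya = fun ω => (fun t => Dmap q p11 (Xa ω t) + Dmap q p12 (Xb ω t)) :=
    funext fun ω => funext fun t => hya ω t
  have hyb' : yb = fun ω => (fun t => Dmap q p21 (Xa ω t) + Dmap q p22 (Xb ω t)) :=
    funext fun ω => funext fun t => hyb ω t
  have hFya : Fib ya := by
    rw [hya']
    exact (hFXa.pair hFXb).comp
      (fun p => fun t => Dmap q p11 (p.1 t) + Dmap q p12 (p.2 t))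
  have hFyb : Fib yb := by
    rw [hyb']
    exact (hFXa.pair hFXb).comp
      (fun p => fun t => Dmap q p21 (p.1 t) + Dmap q p22 (p.2 t))
  have hFSb : Fib Sb := hFXa.comp _
  have hFV : Fib V := hFXb.comp _
  have hFR : Fib R := hFyb.comp _
  -- reconstruction of yb
  have hre : ∀ ω, reconF n q p21 p22 (min (p11 - p12) p21) p12 A1 (Sb ω) (V ω) (R ω) = yb ω := by
    intro ω
    funext t i
    have hiq := i.isLt
    have hA1a : p21 - A1 ≤ min (p11 - p12) p21 := by omega
    have hA1b : p22 - A1 ≤ p12 := by omega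
    simp only [reconF, rmp, sbm, vmp, hSb, hV, hR]
    rw [hyb ω t]
    by_cases hc1 : q - A1 ≤ i.1 ∧ i.1 - (q - A1) < A1
    · rw [dif_pos hc1]
      have hieq : q - A1 + (i.1 - (q - A1)) = i.1 := by omega
      simp only [hieq, Fin.eta]
    · rw [dif_neg hc1]
      simp only [Pi.add_apply]
      congr 1
      · simp only [Dmap]
        by_cases hd : q - p21 ≤ i.1
        · rw [dif_pos ⟨hd, by omega⟩, dif_pos hd]
        · rw [dif_neg (fun hcc => hd hcc.1), dif_neg hd]
      · simp only [Dmap]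
        by_cases hd : q - p22 ≤ i.1
        · rw [dif_pos ⟨hd, by omega⟩, dif_pos hd]
        · rw [dif_neg (fun hcc => hd hcc.1), dif_neg hd]
  -- step 1 : H(C, yb) ≤ H(C, (Sb, V, R))
  have step1 : entropy μ (fun ω => (C ω, yb ω))
      ≤ entropy μ (fun ω => (C ω, (Sb ω, (V ω, R ω)))) := by
    have hc := entropy_comp_le (μ := μ)
      (X := fun ω => (C ω, (Sb ω, (V ω, R ω)))) ((hFC.pair (hFSb.pair (hFV.pair hFR))))
      (f := fun w => (w.1, reconF n q p21 p22 (min (p11 - p12) p21) p12 A1 w.2.1 w.2.2.1 w.2.2.2))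
    have e0 : (fun ω => ((fun w : D × ((Fin n → Fin (min (p11 - p12) p21) → ZMod 2) ×
          ((Fin n → Fin p12 → ZMod 2) × (Fin n → Fin A1 → ZMod 2))) =>
        (w.1, reconF n q p21 p22 (min (p11 - p12) p21) p12 A1 w.2.1 w.2.2.1 w.2.2.2))
        ((C ω, (Sb ω, (V ω, R ω)))))) = (fun ω => (C ω, yb ω)) := by
      funext ω
      show (C ω, reconF n q p21 p22 (min (p11 - p12) p21) p12 A1 (Sb ω) (V ω) (R ω))
        = (C ω, yb ω)
      rw [hre ω]
    rw [e0] at hc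
    exact hc
  -- step 2 : reorder
  have step2 : entropy μ (fun ω => (C ω, (Sb ω, (V ω, R ω))))
      = entropy μ (fun ω => (R ω, (C ω, (Sb ω, V ω)))) := by
    refine entropy_eq_of_comp (hFC.pair (hFSb.pair (hFV.pair hFR)))
      (hFR.pair (hFC.pair (hFSb.pair hFV)))
      (fun w => (w.2.2.2, (w.1, (w.2.1, w.2.2.1))))
      (fun w => (w.2.1, (w.2.2.1, (w.2.2.2, w.1)))) (fun ω => rfl) (fun ω => rfl)
  -- step 3 : cardinality bound on R
  have step3 : entropy μ (fun ω => (R ω, (C ω, (Sb ω, V ω))))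
      ≤ entropy μ (fun ω => (C ω, (Sb ω, V ω)))
        + Real.log (Fintype.card (Fin n → Fin A1 → ZMod 2)) :=
    entropy_pair_le (hFR.pair (hFC.pair (hFSb.pair hFV)))
  -- step 4 : independence split of (C,(Sb,V))
  have hIndSbV : IndepFun (fun ω => (C ω, Sb ω)) V μ := by
    have := hInd.comp (φ := fun w : D × (Fin n → Fin q → ZMod 2) =>
        (w.1, sbm n q p11 p12 p21 h3 w.2)) (ψ := vmp n q p12 h2)
      (measurable_of_countable _) (measurable_of_countable _)
    exact this
  have hprodSbV : ∀ x y, μ ((fun ω => (C ω, Sb ω)) ⁻¹' {x} ∩ V ⁻¹' {y})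
      = μ ((fun ω => (C ω, Sb ω)) ⁻¹' {x}) * μ (V ⁻¹' {y}) := by
    intro x y
    exact (indepFun_iff_measure_inter_preimage_eq_mul.mp hIndSbV) {x} {y}
      (measurableSet_singleton x) (measurableSet_singleton y)
  have step4 : entropy μ (fun ω => (C ω, (Sb ω, V ω)))
      = entropy μ (fun ω => (C ω, Sb ω)) + entropy μ V := by
    have h4a : entropy μ (fun ω => ((C ω, Sb ω), V ω))
        = entropy μ (fun ω => (C ω, Sb ω)) + entropy μ V :=
      entropy_indep (hFC.pair hFSb) hFV hprodSbV
    have h4b : entropy μ (fun ω => (C ω, (Sb ω, V ω)))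
        = entropy μ (fun ω => ((C ω, Sb ω), V ω)) :=
      entropy_eq_of_comp (hFC.pair (hFSb.pair hFV)) ((hFC.pair hFSb).pair hFV)
        (fun w => ((w.1, w.2.1), w.2.2)) (fun w => (w.1.1, (w.1.2, w.2)))
        (fun ω => rfl) (fun ω => rfl)
    rw [h4b, h4a]
  -- step 5 : H(C, Sb) + H(V) ≤ H(C, ya)
  have hext : ∀ ω, sbext n q p11 p12 p21 h1 (ya ω) = Sb ω := by
    intro ω
    funext t j
    have hj := j.isLt
    have hj2 : j.1 < p11 - p12 := lt_of_lt_of_le hj (min_le_left _ _)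
    simp only [sbext, sbm, hSb]
    rw [hya ω t]
    simp only [Pi.add_apply, Dmap]
    rw [dif_pos (by omega : q - p11 ≤ q - p11 + j.1), dif_neg (by omega : ¬ q - p12 ≤ q - p11 + j.1)]
    rw [add_zero]
    congr 1
    exact Fin.ext (by first | omega | simp | (simp only [Fin.val_mk]; omega))
  have step5a : entropy μ (fun ω => (C ω, ya ω))
      = entropy μ (fun ω => (ya ω, (C ω, Sb ω))) := by
    refine entropy_eq_of_comp (hFC.pair hFya) (hFya.pair (hFC.pair hFSb))
      (fun w => (w.2, (w.1, sbext n q p11 p12 p21 h1 w.2)))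
      (fun w => (w.2.1, w.1)) (fun ω => ?_) (fun ω => rfl)
    show (ya ω, (C ω, sbext n q p11 p12 p21 h1 (ya ω))) = (ya ω, (C ω, Sb ω))
    rw [hext ω]
  have step5b := entropy_submod (μ := μ) (X := ya) (Y := fun ω => (C ω, Sb ω)) (Z := Xa)
    (hFya.pair ((hFC.pair hFSb).pair hFXa))
  -- step 5c : H(ya, ((C,Sb), Xa)) = H(C, (Xa, V))
  have hvext : ∀ ω, vext n q p11 p12 h2 (Xa ω) (ya ω) = V ω := by
    intro ω
    funext t k
    have hk := k.isLt
    simp only [vext, vmp, hV]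
    rw [hya ω t]
    simp only [Pi.add_apply]
    have hD12 : Dmap q p12 (Xb ω t) ⟨q - p12 + k.1, by omega⟩ = Xb ω t ⟨k.1, by omega⟩ := by
      simp only [Dmap]
      rw [dif_pos (by first | omega | simp | (simp only [Fin.val_mk]; omega) :
        q - p12 ≤ ((⟨q - p12 + k.1, by omega⟩ : Fin q) : ℕ))]
      congr 1
      exact Fin.ext (by first | omega | simp | (simp only [Fin.val_mk]; omega))
    rw [hD12]
    ring
  have hymk : ∀ ω, (fun t => Dmap q p11 (Xa ω t) + Dmap q p12 (vemb n q p12 (V ω) t)) = ya ω := by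
    intro ω
    funext t i
    have hiq := i.isLt
    rw [hya ω t]
    simp only [Pi.add_apply]
    congr 1
    simp only [Dmap, vemb, vmp, hV]
    by_cases hd : q - p12 ≤ i.1
    · rw [dif_pos hd, dif_pos hd, dif_pos (by omega : i.1 - (q - p12) < p12)]
    · rw [dif_neg hd, dif_neg hd]
  have step5c : entropy μ (fun ω => (ya ω, ((C ω, Sb ω), Xa ω)))
      = entropy μ (fun ω => (C ω, (Xa ω, V ω))) := by
    refine entropy_eq_of_comp (hFya.pair ((hFC.pair hFSb).pair hFXa))
      (hFC.pair (hFXa.pair hFV))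
      (fun w => (w.2.1.1, (w.2.2, vext n q p11 p12 h2 w.2.2 w.1)))
      (fun w => ((fun t => Dmap q p11 (w.2.1 t) + Dmap q p12 (vemb n q p12 w.2.2 t)),
        ((w.1, sbm n q p11 p12 p21 h3 w.2.1), w.2.1)))
      (fun ω => ?_) (fun ω => ?_)
    · show (C ω, (Xa ω, vext n q p11 p12 h2 (Xa ω) (ya ω))) = (C ω, (Xa ω, V ω))
      rw [hvext ω]
    · show ((fun t => Dmap q p11 (Xa ω t) + Dmap q p12 (vemb n q p12 (V ω) t)),
        ((C ω, sbm n q p11 p12 p21 h3 (Xa ω)), Xa ω)) = (ya ω, ((C ω, Sb ω), Xa ω))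
      rw [hymk ω]
  -- step 5d : H(C, (Xa, V)) = H(C, Xa) + H(V)
  have hIndXaV : IndepFun (fun ω => (C ω, Xa ω)) V μ := by
    have := hInd.comp (φ := id) (ψ := vmp n q p12 h2)
      measurable_id (measurable_of_countable _)
    exact this
  have hprodXaV : ∀ x y, μ ((fun ω => (C ω, Xa ω)) ⁻¹' {x} ∩ V ⁻¹' {y})
      = μ ((fun ω => (C ω, Xa ω)) ⁻¹' {x}) * μ (V ⁻¹' {y}) := by
    intro x y
    exact (indepFun_iff_measure_inter_preimage_eq_mul.mp hIndXaV) {x} {y}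
      (measurableSet_singleton x) (measurableSet_singleton y)
  have step5d : entropy μ (fun ω => (C ω, (Xa ω, V ω)))
      = entropy μ (fun ω => (C ω, Xa ω)) + entropy μ V := by
    have h5a : entropy μ (fun ω => ((C ω, Xa ω), V ω))
        = entropy μ (fun ω => (C ω, Xa ω)) + entropy μ V :=
      entropy_indep (hFC.pair hFXa) hFV hprodXaV
    have h5b : entropy μ (fun ω => (C ω, (Xa ω, V ω)))
        = entropy μ (fun ω => ((C ω, Xa ω), V ω)) :=
      entropy_eq_of_comp (hFC.pair (hFXa.pair hFV)) ((hFC.pair hFXa).pair hFV)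
        (fun w => ((w.1, w.2.1), w.2.2)) (fun w => (w.1.1, (w.1.2, w.2)))
        (fun ω => rfl) (fun ω => rfl)
    rw [h5b, h5a]
  -- step 5e : H((C,Sb), Xa) = H(C, Xa)
  have step5e : entropy μ (fun ω => ((C ω, Sb ω), Xa ω)) = entropy μ (fun ω => (C ω, Xa ω)) := by
    refine entropy_eq_of_comp ((hFC.pair hFSb).pair hFXa) (hFC.pair hFXa)
      (fun w => (w.1.1, w.2))
      (fun w => ((w.1, sbm n q p11 p12 p21 h3 w.2), w.2)) (fun ω => rfl) (fun ω => rfl)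
  have step5 : entropy μ (fun ω => (C ω, Sb ω)) + entropy μ V
      ≤ entropy μ (fun ω => (C ω, ya ω)) := by
    rw [step5a]
    have hsub := step5b
    rw [step5c, step5d, step5e] at hsub
    linarith
  -- cardinality computation
  have hcard : Real.log (Fintype.card (Fin n → Fin A1 → ZMod 2))
      ≤ (n : ℝ) * ((max (p21 - (p11 - p12)) (p22 - p12) : ℕ) : ℝ) * Real.log 2 := by
    have hcc : Fintype.card (Fin n → Fin A1 → ZMod 2) = (2 ^ A1) ^ n := by
      rw [Fintype.card_fun, Fintype.card_fun, ZMod.card, Fintype.card_fin, Fintype.card_fin]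
    rw [hcc, Nat.cast_pow, Nat.cast_pow, Nat.cast_ofNat, Real.log_pow, Real.log_pow]
    have hA1le : (A1 : ℝ) ≤ ((max (p21 - (p11 - p12)) (p22 - p12) : ℕ) : ℝ) :=
      Nat.cast_le.2 (min_le_left _ _)
    have hlog2 : (0:ℝ) ≤ Real.log 2 := Real.log_nonneg (by norm_num)
    have hn0 : (0:ℝ) ≤ (n:ℝ) := Nat.cast_nonneg n
    have h' := mul_le_mul_of_nonneg_right hA1le hlog2
    nlinarith [mul_le_mul_of_nonneg_left h' hn0]
  linarith [step1, step2.le, step3, step4.le, step5, hcard]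

theorem stmt0 {Ω : Type*} [MeasurableSpace Ω] (μ : Measure Ω) [IsProbabilityMeasure μ]
    (n q m11 m12 m21 m22 : ℕ) (hn : 1 ≤ n) (hq : 1 ≤ q)
    (h11 : m11 ≤ q) (h12 : m12 ≤ q) (h21 : m21 ≤ q) (h22 : m22 ≤ q)
    {D1 D2 : Type*} [Fintype D1] [Nonempty D1] [MeasurableSpace D1] [DiscreteMeasurableSpace D1]
    [Fintype D2] [Nonempty D2] [MeasurableSpace D2] [DiscreteMeasurableSpace D2]
    (W1 : Ω → D1) (W2 : Ω → D2) (X1 X2 : Ω → (Fin n → Fin q → ZMod 2))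
    (hW1 : Measurable W1) (hW2 : Measurable W2) (hX1 : Measurable X1) (hX2 : Measurable X2)
    (hIndep : IndepFun (fun ω => (W1 ω, X1 ω)) (fun ω => (W2 ω, X2 ω)) μ)
    (y1 y2 : Ω → (Fin n → Fin q → ZMod 2))
    (hy1 : ∀ ω t, y1 ω t = Dmap q m11 (X1 ω t) + Dmap q m12 (X2 ω t))
    (hy2 : ∀ ω t, y2 ω t = Dmap q m21 (X1 ω t) + Dmap q m22 (X2 ω t)) :
    mutualInfo μ W1 y1 - mutualInfo μ W1 y2 + mutualInfo μ W2 y2 - mutualInfo μ W2 y1 ≤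
      (n : ℝ) *
        (((max ((m21 : ℤ) - max ((m11 : ℤ) - (m12 : ℤ)) 0) (max ((m22 : ℤ) - (m12 : ℤ)) 0) +
           max ((m12 : ℤ) - max ((m22 : ℤ) - (m21 : ℤ)) 0) (max ((m11 : ℤ) - (m21 : ℤ)) 0)) : ℤ) : ℝ) *
        Real.log 2 := by
  classical
  have hInd1 : IndepFun (fun ω => (W1 ω, X1 ω)) X2 μ := by
    have := hIndep.comp (φ := id) (ψ := Prod.snd) measurable_id measurable_snd
    exact this
  have hInd2 : IndepFun (fun ω => (W2 ω, X2 ω)) X1 μ := by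
    have := hIndep.symm.comp (φ := id) (ψ := Prod.snd) measurable_id measurable_snd
    exact this
  have bracket1 := key_lemma n q m11 m12 m21 m22 h11 h12 h21 h22 W1 X1 X2 hW1 hX1 hX2 hInd1
    y1 y2 hy1 hy2
  have hy2' : ∀ ω t, y2 ω t = Dmap q m22 (X2 ω t) + Dmap q m21 (X1 ω t) := fun ω t =>
    (hy2 ω t).trans (add_comm _ _)
  have hy1' : ∀ ω t, y1 ω t = Dmap q m12 (X2 ω t) + Dmap q m11 (X1 ω t) := fun ω t =>
    (hy1 ω t).trans (add_comm _ _)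
  have bracket2 := key_lemma n q m22 m21 m12 m11 h22 h21 h12 h11 W2 X2 X1 hW2 hX2 hX1 hInd2
    y2 y1 hy2' hy1'
  have hcastZ : ((max (m21 - (m11 - m12)) (m22 - m12) : ℕ) : ℤ)
      + ((max (m12 - (m22 - m21)) (m11 - m21) : ℕ) : ℤ)
      = max ((m21 : ℤ) - max ((m11 : ℤ) - (m12 : ℤ)) 0) (max ((m22 : ℤ) - (m12 : ℤ)) 0) +
           max ((m12 : ℤ) - max ((m22 : ℤ) - (m21 : ℤ)) 0) (max ((m11 : ℤ) - (m21 : ℤ)) 0) := by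
    omega
  have hRHS : (n : ℝ) *
        (((max ((m21 : ℤ) - max ((m11 : ℤ) - (m12 : ℤ)) 0) (max ((m22 : ℤ) - (m12 : ℤ)) 0) +
           max ((m12 : ℤ) - max ((m22 : ℤ) - (m21 : ℤ)) 0) (max ((m11 : ℤ) - (m21 : ℤ)) 0)) : ℤ) : ℝ) *
        Real.log 2
      = (n : ℝ) * ((max (m21 - (m11 - m12)) (m22 - m12) : ℕ) : ℝ) * Real.log 2
        + (n : ℝ) * ((max (m12 - (m22 - m21)) (m11 - m21) : ℕ) : ℝ) * Real.log 2 := by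
    rw [← hcastZ]
    push_cast
    ring
  rw [hRHS]
  simp only [mutualInfo]
  linarith [bracket1, bracket2]
end

section
/- Let G be a nonempty finite additive commutative group, and let A, B, C, D be nonempty finite types. Let W1 : Ω → D, X1 : Ω → A, S12 : Ω → G, Y2 : Ω → C be random variables such that S12 is independent of the pair (W1, X1). Let φ : A → B and f : A → G be functions, and set S11 := φ ∘ X1 and Y1 := (f ∘ X1) + S12 (pointwise addition in G). Then H(Y2 | W1) − H(Y1 | W1) = −I(X1 : Y1 | ⟨S11, W1⟩) − H(S11 | ⟨Y2, W1⟩) + H(S11 | ⟨Y1, W1⟩) − H(S12 | ⟨Y2, S11, W1⟩) + H(Y2 | ⟨S12, S11, W1⟩). -/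
open MeasureTheory ProbabilityTheory Real

/-- Conditional mutual information I(X : Y | Z) := H(X|Z) + H(Y|Z) − H(⟨X,Y⟩|Z). -/
noncomputable def condMutualInfo {Ω : Type*} [MeasurableSpace Ω] (μ : Measure Ω)
    {S T U : Type*} [Fintype S] [Fintype T] [Fintype U]
    (X : Ω → S) (Y : Ω → T) (Z : Ω → U) : ℝ :=
  condEntropy μ X Z + condEntropy μ Y Z - condEntropy μ (fun ω => (X ω, Y ω)) Z

lemma entropy_comp_inj {Ω : Type*} [MeasurableSpace Ω] (μ : Measure Ω)
    {S T : Type*} [Fintype S] [Fintype T]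
    (X : Ω → S) (e : S → T) (he : Function.Injective e) :
    entropy μ (fun ω => e (X ω)) = entropy μ X := by
  classical
  unfold entropy
  congr 1
  set h : T → ℝ := fun t => (μ ((fun ω => e (X ω)) ⁻¹' {t})).toReal *
      Real.log (μ ((fun ω => e (X ω)) ⁻¹' {t})).toReal with hh
  have key : ∀ x : S, ((fun ω => e (X ω)) ⁻¹' {e x}) = X ⁻¹' {x} := by
    intro x; ext ω; simp [he.eq_iff]
  calc ∑ t : T, h t
      = ∑ t ∈ Finset.univ.image e, h t := by
        refine (Finset.sum_subset (Finset.subset_univ _) ?_).symm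
        intro t _ ht
        have : ((fun ω => e (X ω)) ⁻¹' {t}) = ∅ := by
          ext ω
          simp only [Set.mem_preimage, Set.mem_singleton_iff, Set.mem_empty_iff_false, iff_false]
          intro h'; exact ht (Finset.mem_image.2 ⟨X ω, Finset.mem_univ _, h'⟩)
        simp [hh, this]
    _ = ∑ x : S, h (e x) := Finset.sum_image (fun a _ b _ h' => he h')
    _ = ∑ x : S, (μ (X ⁻¹' {x})).toReal * Real.log (μ (X ⁻¹' {x})).toReal := by
        refine Finset.sum_congr rfl fun x _ => by rw [hh]; simp only [key x]

lemma sum_toReal_meas {Ω : Type*} [MeasurableSpace Ω] (μ : Measure Ω) [IsProbabilityMeasure μ]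
    {S : Type*} [Fintype S] [MeasurableSpace S] [DiscreteMeasurableSpace S]
    (X : Ω → S) (hX : Measurable X) :
    ∑ x : S, (μ (X ⁻¹' {x})).toReal = 1 := by
  have h := sum_measure_preimage_singleton (μ := μ) (f := X) Finset.univ
    (fun b _ => hX (MeasurableSet.singleton b))
  simp only [Finset.coe_univ, Set.preimage_univ, measure_univ] at h
  rw [← ENNReal.toReal_sum (fun x _ => measure_ne_top μ _), h, ENNReal.toReal_one]

lemma entropy_pair_of_indep {Ω : Type*} [MeasurableSpace Ω] (μ : Measure Ω)
    [IsProbabilityMeasure μ]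
    {S T : Type*} [Fintype S] [Fintype T] [MeasurableSpace S] [DiscreteMeasurableSpace S]
    [MeasurableSpace T] [DiscreteMeasurableSpace T]
    (X : Ω → S) (Y : Ω → T) (hX : Measurable X) (hY : Measurable Y)
    (h : IndepFun X Y μ) :
    entropy μ (fun ω => (X ω, Y ω)) = entropy μ X + entropy μ Y := by
  have key : ∀ (x : S) (y : T), ((fun ω => (X ω, Y ω)) ⁻¹' {(x, y)}) =
      X ⁻¹' {x} ∩ Y ⁻¹' {y} := by
    intro x y; ext ω; simp [Prod.ext_iff]
  have hmul : ∀ (x : S) (y : T), (μ ((fun ω => (X ω, Y ω)) ⁻¹' {(x, y)})).toReal =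
      (μ (X ⁻¹' {x})).toReal * (μ (Y ⁻¹' {y})).toReal := by
    intro x y
    rw [key, h.measure_inter_preimage_eq_mul _ _ (MeasurableSet.singleton x)
      (MeasurableSet.singleton y), ENNReal.toReal_mul]
  have hlog : ∀ a b : ℝ, a * b * Real.log (a * b) =
      b * (a * Real.log a) + a * (b * Real.log b) := by
    intro a b
    rcases eq_or_ne a 0 with rfl | ha; · simp
    rcases eq_or_ne b 0 with rfl | hb; · simp
    rw [Real.log_mul ha hb]; ring
  unfold entropy
  rw [Fintype.sum_prod_type]
  have : ∑ x : S, ∑ y : T,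
      (μ ((fun ω => (X ω, Y ω)) ⁻¹' {(x, y)})).toReal *
        Real.log (μ ((fun ω => (X ω, Y ω)) ⁻¹' {(x, y)})).toReal =
      ∑ x : S, ∑ y : T,
      ((μ (Y ⁻¹' {y})).toReal * ((μ (X ⁻¹' {x})).toReal * Real.log (μ (X ⁻¹' {x})).toReal) +
       (μ (X ⁻¹' {x})).toReal * ((μ (Y ⁻¹' {y})).toReal * Real.log (μ (Y ⁻¹' {y})).toReal)) := by
    refine Finset.sum_congr rfl fun x _ => Finset.sum_congr rfl fun y _ => ?_
    rw [hmul, hlog]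
  rw [this]
  simp only [Finset.sum_add_distrib, ← Finset.sum_mul, ← Finset.mul_sum]
  rw [sum_toReal_meas μ X hX, sum_toReal_meas μ Y hY]
  ring

theorem stmt2 {Ω : Type*} [MeasurableSpace Ω] (μ : Measure Ω) [IsProbabilityMeasure μ]
    {G A B C D : Type*} [Fintype G] [Nonempty G] [AddCommGroup G]
    [MeasurableSpace G] [DiscreteMeasurableSpace G]
    [Fintype A] [Nonempty A] [MeasurableSpace A] [DiscreteMeasurableSpace A]
    [Fintype B] [Nonempty B]
    [Fintype C] [Nonempty C] [MeasurableSpace C] [DiscreteMeasurableSpace C]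
    [Fintype D] [Nonempty D] [MeasurableSpace D] [DiscreteMeasurableSpace D]
    (W1 : Ω → D) (X1 : Ω → A) (S12 : Ω → G) (Y2 : Ω → C)
    (hW1 : Measurable W1) (hX1 : Measurable X1) (hS12 : Measurable S12) (hY2 : Measurable Y2)
    (hIndep : IndepFun S12 (fun ω => (W1 ω, X1 ω)) μ)
    (φ : A → B) (f : A → G)
    (S11 : Ω → B) (hS11 : S11 = φ ∘ X1)
    (Y1 : Ω → G) (hY1 : Y1 = fun ω => f (X1 ω) + S12 ω) :
    condEntropy μ Y2 W1 - condEntropy μ Y1 W1 =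
      - condMutualInfo μ X1 Y1 (fun ω => (S11 ω, W1 ω))
      - condEntropy μ S11 (fun ω => (Y2 ω, W1 ω))
      + condEntropy μ S11 (fun ω => (Y1 ω, W1 ω))
      - condEntropy μ S12 (fun ω => (Y2 ω, S11 ω, W1 ω))
      + condEntropy μ Y2 (fun ω => (S12 ω, S11 ω, W1 ω)) := by
  classical
  letI : MeasurableSpace B := ⊤
  haveI : DiscreteMeasurableSpace B := ⟨fun _ => trivial⟩
  have hφ : Measurable φ := Measurable.of_discrete
  have hS11m : Measurable S11 := by rw [hS11]; exact hφ.comp hX1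
  have hY1m : Measurable Y1 := by
    rw [hY1]
    exact ((Measurable.of_discrete (f := f)).comp hX1).add hS12
  -- permutation injectivity helper uses: simp [Prod.ext_iff]; tauto
  -- E1 : H(Y2,(S11,W1)) = H(S11,(Y2,W1))
  have h1 : entropy μ (fun ω => (Y2 ω, (S11 ω, W1 ω))) =
      entropy μ (fun ω => (S11 ω, (Y2 ω, W1 ω))) := by
    have := entropy_comp_inj μ (fun ω => (S11 ω, (Y2 ω, W1 ω)))
      (fun p : B × C × D => (p.2.1, (p.1, p.2.2)))
      (fun p q h => by simp [Prod.ext_iff] at h ⊢; tauto)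
    simpa using this
  -- E2 : H(Y2,(S12,(S11,W1))) = H(S12,(Y2,(S11,W1)))
  have h2 : entropy μ (fun ω => (Y2 ω, (S12 ω, (S11 ω, W1 ω)))) =
      entropy μ (fun ω => (S12 ω, (Y2 ω, (S11 ω, W1 ω)))) := by
    have := entropy_comp_inj μ (fun ω => (S12 ω, (Y2 ω, (S11 ω, W1 ω))))
      (fun p : G × C × B × D => (p.2.1, (p.1, p.2.2)))
      (fun p q h => by simp [Prod.ext_iff] at h ⊢; tauto)
    simpa using this
  -- E6 : H(Y1,(S11,W1)) = H(S11,(Y1,W1))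
  have h6 : entropy μ (fun ω => (Y1 ω, (S11 ω, W1 ω))) =
      entropy μ (fun ω => (S11 ω, (Y1 ω, W1 ω))) := by
    have := entropy_comp_inj μ (fun ω => (S11 ω, (Y1 ω, W1 ω)))
      (fun p : B × G × D => (p.2.1, (p.1, p.2.2)))
      (fun p q h => by simp [Prod.ext_iff] at h ⊢; tauto)
    simpa using this
  -- E3 : H(X1,(S11,W1)) = H(X1,W1)
  have h3 : entropy μ (fun ω => (X1 ω, (S11 ω, W1 ω))) =
      entropy μ (fun ω => (X1 ω, W1 ω)) := by
    have := entropy_comp_inj μ (fun ω => (X1 ω, W1 ω))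
      (fun p : A × D => (p.1, (φ p.1, p.2)))
      (fun p q h => by simp [Prod.ext_iff] at h ⊢; tauto)
    simp only [hS11, Function.comp]
    simpa using this
  -- H(W1,X1) = H(X1,W1)
  have hswap : entropy μ (fun ω => (W1 ω, X1 ω)) =
      entropy μ (fun ω => (X1 ω, W1 ω)) := by
    have := entropy_comp_inj μ (fun ω => (X1 ω, W1 ω))
      (fun p : A × D => (p.2, p.1))
      (fun p q h => by simp [Prod.ext_iff] at h ⊢; tauto)
    simpa using this
  -- E4 : H((X1,Y1),(S11,W1)) = H(X1,W1) + H(S12)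
  have h4 : entropy μ (fun ω => ((X1 ω, Y1 ω), (S11 ω, W1 ω))) =
      entropy μ (fun ω => (X1 ω, W1 ω)) + entropy μ S12 := by
    have einj : Function.Injective
        (fun p : G × D × A => ((p.2.2, f p.2.2 + p.1), (φ p.2.2, p.2.1))) := by
      intro p q h
      simp only [Prod.ext_iff] at h ⊢
      obtain ⟨⟨ha, hfg⟩, _, hd⟩ := h
      refine ⟨?_, hd, ha⟩
      rw [ha] at hfg
      exact add_left_cancel hfg
    have step1 := entropy_comp_inj μ (fun ω => (S12 ω, (W1 ω, X1 ω)))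
      (fun p : G × D × A => ((p.2.2, f p.2.2 + p.1), (φ p.2.2, p.2.1))) einj
    have step2 := entropy_pair_of_indep μ S12 (fun ω => (W1 ω, X1 ω)) hS12
      (hW1.prodMk hX1) hIndep
    simp only [hS11, hY1, Function.comp]
    rw [show (fun ω => ((X1 ω, f (X1 ω) + S12 ω), (φ (X1 ω), W1 ω))) =
      (fun ω => ((fun p : G × D × A => ((p.2.2, f p.2.2 + p.1), (φ p.2.2, p.2.1)))
        (S12 ω, (W1 ω, X1 ω)))) from rfl, step1, step2, hswap]
    ring
  -- E5 : H(S12,(S11,W1)) = H(S12) + H(S11,W1)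
  have h5 : entropy μ (fun ω => (S12 ω, (S11 ω, W1 ω))) =
      entropy μ S12 + entropy μ (fun ω => (S11 ω, W1 ω)) := by
    have hI : IndepFun S12 (fun ω => (S11 ω, W1 ω)) μ := by
      have := hIndep.comp (φ := id) (ψ := fun p : D × A => (φ p.2, p.1))
        measurable_id ((hφ.comp measurable_snd).prodMk measurable_fst)
      rw [hS11]
      exact this
    exact entropy_pair_of_indep μ S12 _ hS12 (hS11m.prodMk hW1) hI
  simp only [condMutualInfo, condEntropy]
  rw [h1, h2, h3, h4, h5, h6]
  ring
end

section
/- Let G be a nonempty finite additive commutative group, and let A, B, C, D be nonempty finite types. Let W1 : Ω → D, X1 : Ω → A, S12 : Ω → G, Y2 : Ω → C be random variables such that S12 is independent of the pair (W1, X1). Let φ : A → B and f : A → G be functions, and set S11 := φ ∘ X1 and Y1 := (f ∘ X1) + S12 (pointwise addition in G). Then H(Y2 | W1) − H(Y1 | W1) ≤ H(S11 | ⟨Y1, W1⟩) + H(Y2 | ⟨S12, S11, W1⟩). -/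
open MeasureTheory ProbabilityTheory Real

/-!
Cancelling `H(W1)` and `H(Y1, W1)`, the claim splits into `H(Y2, W1) ≤ H(Y2, S12, S11, W1)`,
which is monotonicity of entropy under a projection, and `H(S12 | S11, W1) ≤ H(Y1 | S11, W1)`.
By independence the left side of the latter is `H(S12)`, while conditioning on the finer
`(X1, W1)` can only lower the right side, to `H(f X1 + S12 | X1, W1) = H(S12 | X1, W1) = H(S12)`.
That conditioning reduces entropy is Gibbs' inequality for a suitable comparison distribution.
-/

section

lemma negMulLog_sum_le {ι : Type*} (s : Finset ι) {a : ι → ℝ} (ha : ∀ i ∈ s, 0 ≤ a i) :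
    negMulLog (∑ i ∈ s, a i) ≤ ∑ i ∈ s, negMulLog (a i) := by
  simp only [negMulLog, neg_mul, Finset.sum_neg_distrib, Finset.sum_mul, neg_le_neg_iff]
  refine Finset.sum_le_sum fun i hi => ?_
  rcases (ha i hi).eq_or_lt with h0 | h0
  · simp [← h0]
  · exact mul_le_mul_of_nonneg_left (log_le_log h0 (Finset.single_le_sum ha hi)) h0.le

lemma sum_mul_log_le_sum_mul_log {ι : Type*} (s : Finset ι) {p q : ι → ℝ}
    (hp : ∀ i ∈ s, 0 ≤ p i) (hq : ∀ i ∈ s, 0 ≤ q i) (hpq : ∀ i ∈ s, 0 < p i → 0 < q i)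
    (hsum : ∑ i ∈ s, q i ≤ ∑ i ∈ s, p i) :
    ∑ i ∈ s, p i * log (q i) ≤ ∑ i ∈ s, p i * log (p i) := by
  suffices ∑ i ∈ s, (p i * log (q i) - p i * log (p i)) ≤ ∑ i ∈ s, (q i - p i) by
    rw [Finset.sum_sub_distrib, Finset.sum_sub_distrib] at this
    linarith
  refine Finset.sum_le_sum fun i hi => ?_
  rcases (hp i hi).eq_or_lt with h0 | h0
  · simp [← h0, hq i hi]
  · have hqi := hpq i hi h0
    calc p i * log (q i) - p i * log (p i) = p i * log (q i / p i) := by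
          rw [log_div hqi.ne' h0.ne']; ring
      _ ≤ p i * (q i / p i - 1) :=
          mul_le_mul_of_nonneg_left (log_le_sub_one_of_pos (div_pos hqi h0)) h0.le
      _ = q i - p i := by field_simp

variable {Ω : Type*} [MeasurableSpace Ω] {μ : Measure Ω} {S T : Type*} [Fintype S]

lemma entropy_eq_sum_negMulLog (X : Ω → S) :
    entropy μ X = ∑ s, negMulLog (μ.real (X ⁻¹' {s})) := by
  simp only [entropy, negMulLog, neg_mul, Finset.sum_neg_distrib, measureReal_def]

lemma entropy_comp_of_injective [Fintype T] (X : Ω → S) {e : S → T}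
    (he : Function.Injective e) :
    entropy μ (fun ω => e (X ω)) = entropy μ X := by
  simp only [entropy_eq_sum_negMulLog]
  refine (Fintype.sum_of_injective e he _ _ (fun t ht => ?_) fun s => ?_).symm
  · have : (fun ω => e (X ω)) ⁻¹' {t} = ∅ := by
      ext ω; simpa using fun h => ht ⟨X ω, h⟩
    simp [this]
  · congr 2
    ext ω
    simp [he.eq_iff]

section FiniteMeasure

variable [IsFiniteMeasure μ] [MeasurableSpace S] [MeasurableSingletonClass S] {X : Ω → S}

lemma sum_measureReal_preimage_pair (hX : Measurable X) (Y : Ω → T) (t : T) :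
    ∑ s, μ.real ((fun ω => (X ω, Y ω)) ⁻¹' {(s, t)}) = μ.real (Y ⁻¹' {t}) := by
  have hpair : ∀ s, (fun ω => (X ω, Y ω)) ⁻¹' {(s, t)} = X ⁻¹' {s} ∩ Y ⁻¹' {t} := by
    intro s; ext ω; simp
  simp_rw [hpair, ← measureReal_restrict_apply (hX (measurableSet_singleton _))]
  rw [sum_measureReal_preimage_singleton _ fun s _ => hX (measurableSet_singleton s)]
  simp

lemma measureReal_preimage_comp [DecidableEq T] (hX : Measurable X) (g : S → T) (t : T) :
    μ.real ((fun ω => g (X ω)) ⁻¹' {t}) = ∑ s with g s = t, μ.real (X ⁻¹' {s}) := by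
  rw [sum_measureReal_preimage_singleton _ fun s _ => hX (measurableSet_singleton s)]
  congr 1
  ext ω
  simp

variable [Fintype T]

lemma sum_measureReal_preimage_comp_mul (hX : Measurable X) (g : S → T) (k : T → ℝ) :
    ∑ t, μ.real ((fun ω => g (X ω)) ⁻¹' {t}) * k t = ∑ s, μ.real (X ⁻¹' {s}) * k (g s) := by
  classical
  rw [← Finset.sum_fiberwise Finset.univ g]
  refine Finset.sum_congr rfl fun t _ => ?_
  rw [measureReal_preimage_comp hX, Finset.sum_mul]
  exact Finset.sum_congr rfl fun s hs => by rw [(Finset.mem_filter.1 hs).2]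

lemma entropy_comp_eq_neg_sum_mul_log (hX : Measurable X) (g : S → T) :
    entropy μ (fun ω => g (X ω))
      = -∑ s, μ.real (X ⁻¹' {s}) * log (μ.real ((fun ω => g (X ω)) ⁻¹' {g s})) := by
  rw [entropy_eq_sum_negMulLog]
  simp only [negMulLog, neg_mul, Finset.sum_neg_distrib, neg_inj]
  exact sum_measureReal_preimage_comp_mul hX g fun t => log (μ.real ((fun ω => g (X ω)) ⁻¹' {t}))

lemma entropy_comp_le (hX : Measurable X) (g : S → T) :
    entropy μ (fun ω => g (X ω)) ≤ entropy μ X := by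
  classical
  simp only [entropy_eq_sum_negMulLog, measureReal_preimage_comp hX]
  calc ∑ t, negMulLog (∑ s with g s = t, μ.real (X ⁻¹' {s}))
      ≤ ∑ t, ∑ s with g s = t, negMulLog (μ.real (X ⁻¹' {s})) :=
        Finset.sum_le_sum fun t _ => negMulLog_sum_le _ fun _ _ => measureReal_nonneg
    _ = ∑ s, negMulLog (μ.real (X ⁻¹' {s})) := Finset.sum_fiberwise _ _ _

lemma sum_measureReal_preimage_mul_div_le (hX : Measurable X) (Y : Ω → T) {W : Type*}
    (F : T → W) :
    ∑ p : S × T, μ.real ((fun ω => (X ω, F (Y ω))) ⁻¹' {(p.1, F p.2)}) * μ.real (Y ⁻¹' {p.2})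
        / μ.real ((fun ω => F (Y ω)) ⁻¹' {F p.2})
      ≤ ∑ t, μ.real (Y ⁻¹' {t}) := by
  rw [Fintype.sum_prod_type_right]
  refine Finset.sum_le_sum fun t _ => ?_
  simp only [← Finset.sum_div, ← Finset.sum_mul, sum_measureReal_preimage_pair hX]
  rw [mul_div_right_comm]
  exact mul_le_of_le_one_left measureReal_nonneg (div_self_le_one _)

lemma condEntropy_le_condEntropy_comp [MeasurableSpace T] [MeasurableSingletonClass T]
    {W : Type*} [Fintype W] {Y : Ω → T} (hX : Measurable X) (hY : Measurable Y) (F : T → W) :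
    condEntropy μ X Y ≤ condEntropy μ X (fun ω => F (Y ω)) := by
  have hXY : Measurable fun ω => (X ω, Y ω) := hX.prodMk hY
  set a : S × T → ℝ := fun p => μ.real ((fun ω => (X ω, Y ω)) ⁻¹' {p})
  set b : S × W → ℝ := fun p => μ.real ((fun ω => (X ω, F (Y ω))) ⁻¹' {p})
  set c : T → ℝ := fun t => μ.real (Y ⁻¹' {t})
  set d : W → ℝ := fun w => μ.real ((fun ω => F (Y ω)) ⁻¹' {w})
  have hab : ∀ p, a p ≤ b (p.1, F p.2) := fun p =>
    measureReal_mono fun ω (hω : (X ω, Y ω) = p) => by simp [← hω]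
  have hac : ∀ p, a p ≤ c p.2 := fun p =>
    measureReal_mono fun ω (hω : (X ω, Y ω) = p) => by simp [← hω]
  have hcd : ∀ t, c t ≤ d (F t) := fun t =>
    measureReal_mono fun ω (hω : Y ω = t) => by simp [← hω]
  -- Gibbs' inequality against `q(x, y) = P(X = x, F Y = F y) P(Y = y) / P(F Y = F y)`
  set q : S × T → ℝ := fun p => b (p.1, F p.2) * c p.2 / d (F p.2)
  have hpos : ∀ p, 0 < a p → 0 < q p := fun p hp =>
    div_pos (mul_pos (hp.trans_le (hab p)) (hp.trans_le (hac p)))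
      ((hp.trans_le (hac p)).trans_le (hcd p.2))
  have hsum : ∑ p, q p ≤ ∑ p, a p := by
    calc ∑ p, q p ≤ ∑ t, c t := sum_measureReal_preimage_mul_div_le hX Y F
      _ = ∑ p, a p := by
          rw [Fintype.sum_prod_type_right]
          simp only [a, c, sum_measureReal_preimage_pair hX]
  have hgibbs := sum_mul_log_le_sum_mul_log (p := a) Finset.univ
    (fun p _ => measureReal_nonneg) (fun p _ => by positivity) (fun p _ => hpos p) hsum
  have hlog : ∀ p, a p * log (q p)
      = a p * log (b (p.1, F p.2)) + a p * log (c p.2) - a p * log (d (F p.2)) := by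
    intro p
    have ha0 : 0 ≤ a p := measureReal_nonneg
    rcases ha0.eq_or_lt with h0 | h0
    · rw [← h0]
      ring
    · have hb := h0.trans_le (hab p)
      have hc := h0.trans_le (hac p)
      rw [log_div (mul_pos hb hc).ne' (hc.trans_le (hcd p.2)).ne', log_mul hb.ne' hc.ne']
      ring
  rw [Finset.sum_congr rfl fun p _ => hlog p, Finset.sum_sub_distrib,
    Finset.sum_add_distrib] at hgibbs
  have ha : entropy μ (fun ω => (X ω, Y ω)) = -∑ p, a p * log (a p) :=
    entropy_comp_eq_neg_sum_mul_log hXY id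
  have hb : entropy μ (fun ω => (X ω, F (Y ω))) = -∑ p, a p * log (b (p.1, F p.2)) :=
    entropy_comp_eq_neg_sum_mul_log hXY fun p => (p.1, F p.2)
  have hc : entropy μ Y = -∑ p, a p * log (c p.2) :=
    entropy_comp_eq_neg_sum_mul_log hXY Prod.snd
  have hd : entropy μ (fun ω => F (Y ω)) = -∑ p, a p * log (d (F p.2)) :=
    entropy_comp_eq_neg_sum_mul_log hXY fun p => F p.2
  rw [condEntropy, condEntropy, ha, hb, hc, hd]
  linarith

end FiniteMeasure

section ProbabilityMeasure

variable [IsProbabilityMeasure μ] [MeasurableSpace S] [MeasurableSingletonClass S] {X : Ω → S}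

lemma sum_measureReal_preimage_eq_one (hX : Measurable X) : ∑ s, μ.real (X ⁻¹' {s}) = 1 := by
  rw [sum_measureReal_preimage_singleton _ fun s _ => hX (measurableSet_singleton s)]
  simp

lemma entropy_pair_eq_add_of_indepFun [Fintype T] [MeasurableSpace T] [MeasurableSingletonClass T]
    {Y : Ω → T} (hX : Measurable X) (hY : Measurable Y) (h : IndepFun X Y μ) :
    entropy μ (fun ω => (X ω, Y ω)) = entropy μ X + entropy μ Y := by
  have hmul : ∀ s t, μ.real ((fun ω => (X ω, Y ω)) ⁻¹' {(s, t)})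
      = μ.real (X ⁻¹' {s}) * μ.real (Y ⁻¹' {t}) := by
    intro s t
    have : (fun ω => (X ω, Y ω)) ⁻¹' {(s, t)} = X ⁻¹' {s} ∩ Y ⁻¹' {t} := by ext ω; simp
    rw [this, measureReal_def, h.measure_inter_preimage_eq_mul _ _ (measurableSet_singleton s)
      (measurableSet_singleton t), ENNReal.toReal_mul, measureReal_def, measureReal_def]
  simp only [entropy_eq_sum_negMulLog, Fintype.sum_prod_type, hmul, negMulLog_mul,
    Finset.sum_add_distrib, ← Finset.sum_mul, ← Finset.mul_sum]
  rw [sum_measureReal_preimage_eq_one hX, sum_measureReal_preimage_eq_one hY]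
  ring

lemma condEntropy_eq_entropy_of_indepFun [Fintype T] [MeasurableSpace T]
    [MeasurableSingletonClass T] {Y : Ω → T} (hX : Measurable X) (hY : Measurable Y)
    (h : IndepFun X Y μ) :
    condEntropy μ X Y = entropy μ X := by
  rw [condEntropy, entropy_pair_eq_add_of_indepFun hX hY h, add_sub_cancel_right]

lemma condEntropy_add_eq_entropy_of_indepFun {G : Type*} [Fintype G] [AddGroup G]
    [MeasurableSpace G] [MeasurableSingletonClass G] {Z : Ω → G} (hZ : Measurable Z)
    (hX : Measurable X) (h : IndepFun Z X μ) (f : S → G) :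
    condEntropy μ (fun ω => f (X ω) + Z ω) X = entropy μ Z := by
  have hshift : Function.Injective fun p : G × S => (f p.2 + p.1, p.2) := by
    rintro ⟨z, x⟩ ⟨z', x'⟩ hzx
    obtain ⟨hz, rfl⟩ := Prod.mk.inj hzx
    simpa using hz
  rw [condEntropy, entropy_comp_of_injective (fun ω => (Z ω, X ω)) hshift,
    entropy_pair_eq_add_of_indepFun hZ hX h, add_sub_cancel_right]

end ProbabilityMeasure

end

theorem stmt3_general {Ω : Type*} [MeasurableSpace Ω] (μ : Measure Ω) [IsProbabilityMeasure μ]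
    {G A B C D : Type*} [Fintype G] [AddCommGroup G]
    [MeasurableSpace G] [DiscreteMeasurableSpace G]
    [Fintype A] [MeasurableSpace A] [DiscreteMeasurableSpace A]
    [Fintype B]
    [Fintype C] [MeasurableSpace C] [DiscreteMeasurableSpace C]
    [Fintype D] [MeasurableSpace D] [DiscreteMeasurableSpace D]
    (W1 : Ω → D) (X1 : Ω → A) (S12 : Ω → G) (Y2 : Ω → C)
    (hW1 : Measurable W1) (hX1 : Measurable X1) (hS12 : Measurable S12) (hY2 : Measurable Y2)
    (hIndep : IndepFun S12 (fun ω => (W1 ω, X1 ω)) μ)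
    (φ : A → B) (f : A → G)
    (S11 : Ω → B) (hS11 : S11 = φ ∘ X1)
    (Y1 : Ω → G) (hY1 : Y1 = fun ω => f (X1 ω) + S12 ω) :
    condEntropy μ Y2 W1 - condEntropy μ Y1 W1 ≤
      condEntropy μ S11 (fun ω => (Y1 ω, W1 ω))
      + condEntropy μ Y2 (fun ω => (S12 ω, S11 ω, W1 ω)) := by
  let _ : MeasurableSpace B := ⊤
  subst hS11 hY1
  have hXW : Measurable fun ω => (X1 ω, W1 ω) := hX1.prodMk hW1
  have hSW : Measurable fun ω => (φ (X1 ω), W1 ω) := (Measurable.of_discrete.comp hX1).prodMk hW1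
  have hY1 : Measurable fun ω => f (X1 ω) + S12 ω := (Measurable.of_discrete.comp hX1).add hS12
  have hproj : entropy μ (fun ω => (Y2 ω, W1 ω))
      ≤ entropy μ (fun ω => (Y2 ω, S12 ω, φ (X1 ω), W1 ω)) :=
    entropy_comp_le (hY2.prodMk (hS12.prodMk hSW)) fun p => (p.1, p.2.2.2)
  have hnoise : entropy μ S12
      ≤ condEntropy μ (fun ω => f (X1 ω) + S12 ω) fun ω => (φ (X1 ω), W1 ω) :=
    calc entropy μ S12
        = condEntropy μ (fun ω => f (X1 ω) + S12 ω) fun ω => (X1 ω, W1 ω) :=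
          (condEntropy_add_eq_entropy_of_indepFun hS12 hXW
            (hIndep.comp measurable_id measurable_swap) fun p => f p.1).symm
      _ ≤ _ := condEntropy_le_condEntropy_comp hY1 hXW fun p => (φ p.1, p.2)
  have hS12_indep : condEntropy μ S12 (fun ω => (φ (X1 ω), W1 ω)) = entropy μ S12 :=
    condEntropy_eq_entropy_of_indepFun hS12 hSW
      (hIndep.comp measurable_id (Measurable.of_discrete (f := fun p : D × A => (φ p.2, p.1))))
  have hswap : entropy μ (fun ω => (φ (X1 ω), f (X1 ω) + S12 ω, W1 ω))
      = entropy μ (fun ω => (f (X1 ω) + S12 ω, φ (X1 ω), W1 ω)) :=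
    entropy_comp_of_injective (fun ω => (f (X1 ω) + S12 ω, φ (X1 ω), W1 ω))
      (e := fun p : G × B × D => (p.2.1, p.1, p.2.2)) fun p q h => by
        simp only [Prod.ext_iff] at h ⊢; tauto
  simp only [condEntropy, Function.comp_apply] at hnoise hS12_indep ⊢
  linarith

theorem stmt3 {Ω : Type*} [MeasurableSpace Ω] (μ : Measure Ω) [IsProbabilityMeasure μ]
    {G A B C D : Type*} [Fintype G] [Nonempty G] [AddCommGroup G]
    [MeasurableSpace G] [DiscreteMeasurableSpace G]
    [Fintype A] [Nonempty A] [MeasurableSpace A] [DiscreteMeasurableSpace A]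
    [Fintype B] [Nonempty B]
    [Fintype C] [Nonempty C] [MeasurableSpace C] [DiscreteMeasurableSpace C]
    [Fintype D] [Nonempty D] [MeasurableSpace D] [DiscreteMeasurableSpace D]
    (W1 : Ω → D) (X1 : Ω → A) (S12 : Ω → G) (Y2 : Ω → C)
    (hW1 : Measurable W1) (hX1 : Measurable X1) (hS12 : Measurable S12) (hY2 : Measurable Y2)
    (hIndep : IndepFun S12 (fun ω => (W1 ω, X1 ω)) μ)
    (φ : A → B) (f : A → G)
    (S11 : Ω → B) (hS11 : S11 = φ ∘ X1)
    (Y1 : Ω → G) (hY1 : Y1 = fun ω => f (X1 ω) + S12 ω) :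
    condEntropy μ Y2 W1 - condEntropy μ Y1 W1 ≤
      condEntropy μ S11 (fun ω => (Y1 ω, W1 ω))
      + condEntropy μ Y2 (fun ω => (S12 ω, S11 ω, W1 ω)) :=
  stmt3_general μ W1 X1 S12 Y2 hW1 hX1 hS12 hY2 hIndep φ f S11 hS11 Y1 hY1
end

section
/- Let q, m11, m12, m21, m22 be naturals with m11, m12, m21, m22 ≤ q and let r := max( (m21 − (m11 − m12)^+)^+, (m22 − m12)^+ ) (arithmetic over the integers). For any x1, x1', x2, x2' : Fin q → ZMod 2, if x1 and x1' agree on all coordinates j with (j : ℕ) < (m11 − m12)^+, and x2 and x2' agree on all coordinates j with (j : ℕ) < m12, then the outputs D_{m21} x1 + D_{m22} x2 and D_{m21} x1' + D_{m22} x2' agree on all coordinates i with (i : ℕ) < q − r. -/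
theorem stmt9 (q m11 m12 m21 m22 : ℕ)
    (h11 : m11 ≤ q) (h12 : m12 ≤ q) (h21 : m21 ≤ q) (h22 : m22 ≤ q)
    (r : ℤ)
    (hr : r = max (max ((m21 : ℤ) - max ((m11 : ℤ) - (m12 : ℤ)) 0) 0)
               (max ((m22 : ℤ) - (m12 : ℤ)) 0))
    (x1 x1' x2 x2' : Fin q → ZMod 2)
    (hx1 : ∀ j : Fin q, ((j : ℕ) : ℤ) < max ((m11 : ℤ) - (m12 : ℤ)) 0 → x1 j = x1' j)
    (hx2 : ∀ j : Fin q, (j : ℕ) < m12 → x2 j = x2' j) :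
    ∀ i : Fin q, ((i : ℕ) : ℤ) < (q : ℤ) - r →
      Dmap q m21 x1 i + Dmap q m22 x2 i = Dmap q m21 x1' i + Dmap q m22 x2' i := by
  intro i hi
  have hiq := i.isLt
  have h1 : Dmap q m21 x1 i = Dmap q m21 x1' i := by
    unfold Dmap
    split
    · next h =>
      apply hx1
      simp only
      have : (((i : ℕ) - (q - m21) : ℕ) : ℤ) = (i : ℕ) - ((q : ℤ) - m21) := by
        push_cast [Nat.cast_sub h, Nat.cast_sub h21]
        ring
      rw [this]
      rcases le_total ((m11 : ℤ) - m12) 0 with hc | hc <;>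
        rcases le_total ((m22 : ℤ) - m12) 0 with hd | hd <;>
        simp_all <;> omega
    · rfl
  have h2 : Dmap q m22 x2 i = Dmap q m22 x2' i := by
    unfold Dmap
    split
    · next h =>
      apply hx2
      simp only
      have : ((i : ℕ) : ℤ) - ((q : ℤ) - m22) < m12 := by
        rcases le_total ((m11 : ℤ) - m12) 0 with hc | hc <;>
          rcases le_total ((m22 : ℤ) - m12) 0 with hd | hd <;>
          rcases le_total ((m21 : ℤ) - max ((m11 : ℤ) - m12) 0) 0 with he | he <;>
          simp_all <;> omega
      omega
    · rfl
  rw [h1, h2]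
end

section
/- For all real numbers a and b, the function P ↦ ( logb 2 (1 + P^a / 2) + logb 2 (1 + P^b / 2) − 2 ) / logb 2 P tends to max(a, 0) + max(b, 0) as P → ∞ (limit along the real numbers tending to +∞), where P^a denotes the real power and logb 2 is the base-2 logarithm. -/
/-! For `P ≥ 1` the quantity `a + b P^c` lies between `min a b · P^(max c 0)` and
`(a + b) · P^(max c 0)`, so its logarithm is `max c 0 · log P + O(1)`. After the change of base
`logb 2 = log / log 2` the bounded terms, including the `-2`, disappear on division by `log P`. -/

open Filter Real Topology

theorem min_mul_rpow_max_le_add_mul_rpow {a b P : ℝ} (ha : 0 ≤ a) (hb : 0 ≤ b) (hP : 1 ≤ P)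
    (c : ℝ) : min a b * P ^ max c 0 ≤ a + b * P ^ c := by
  have hc : 0 ≤ P ^ c := rpow_nonneg (by linarith) c
  rcases max_cases c 0 with ⟨h, -⟩ | ⟨h, -⟩ <;> rw [h]
  · nlinarith [min_le_right a b]
  · rw [rpow_zero]
    nlinarith [min_le_left a b]

theorem add_mul_rpow_le_add_mul_rpow_max {a b P : ℝ} (ha : 0 ≤ a) (hb : 0 ≤ b) (hP : 1 ≤ P)
    (c : ℝ) : a + b * P ^ c ≤ (a + b) * P ^ max c 0 := by
  have hcm : P ^ c ≤ P ^ max c 0 := rpow_le_rpow_of_exponent_le hP (le_max_left c 0)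
  have hm : 1 ≤ P ^ max c 0 := one_le_rpow hP (le_max_right c 0)
  nlinarith

theorem tendsto_log_mul_rpow_div_log {K : ℝ} (hK : 0 < K) (m : ℝ) :
    Tendsto (fun P : ℝ => log (K * P ^ m) / log P) atTop (𝓝 m) := by
  have h : Tendsto (fun P : ℝ => log K / log P + m) atTop (𝓝 (0 + m)) :=
    (tendsto_const_nhds.div_atTop tendsto_log_atTop).add tendsto_const_nhds
  rw [zero_add] at h
  refine h.congr' ?_
  filter_upwards [eventually_gt_atTop 1] with P hP
  rw [log_mul hK.ne' (rpow_pos_of_pos (by linarith) m).ne', log_rpow (by linarith)]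
  field_simp [(log_pos hP).ne']

theorem tendsto_log_add_mul_rpow_div_log {a b : ℝ} (ha : 0 < a) (hb : 0 < b) (c : ℝ) :
    Tendsto (fun P : ℝ => log (a + b * P ^ c) / log P) atTop (𝓝 (max c 0)) := by
  refine tendsto_of_tendsto_of_tendsto_of_le_of_le'
    (tendsto_log_mul_rpow_div_log (lt_min ha hb) _)
    (tendsto_log_mul_rpow_div_log (add_pos ha hb) _) ?_ ?_ <;>
  filter_upwards [eventually_ge_atTop 1] with P hP <;>
  refine div_le_div_of_nonneg_right (log_le_log ?_ ?_) (log_nonneg hP)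
  · exact mul_pos (lt_min ha hb) (rpow_pos_of_pos (by linarith) _)
  · exact min_mul_rpow_max_le_add_mul_rpow ha.le hb.le hP c
  · exact add_pos_of_pos_of_nonneg ha (mul_nonneg hb.le (rpow_nonneg (by linarith) c))
  · exact add_mul_rpow_le_add_mul_rpow_max ha.le hb.le hP c

theorem stmt16 (a b : ℝ) :
    Filter.Tendsto
      (fun P : ℝ =>
        (Real.logb 2 (1 + P ^ a / 2) + Real.logb 2 (1 + P ^ b / 2) - 2) / Real.logb 2 P)
      Filter.atTop (nhds (max a 0 + max b 0)) := by
  have hA := tendsto_log_add_mul_rpow_div_log one_pos (half_pos one_pos) a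
  have hB := tendsto_log_add_mul_rpow_div_log one_pos (half_pos one_pos) b
  have h2 : Tendsto (fun P : ℝ => 2 * log 2 / log P) atTop (𝓝 0) :=
    tendsto_const_nhds.div_atTop tendsto_log_atTop
  rw [← sub_zero (max a 0 + max b 0)]
  refine ((hA.add hB).sub h2).congr fun P => ?_
  have hl2 : log 2 ≠ 0 := (log_pos one_lt_two).ne'
  simp only [logb, div_eq_inv_mul]
  field_simp
end
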